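/- arXiv:1110.4840 — 3 statements merged into one kernel-verified Lean document; each statement's English description precedes it below -/
import Mathlib

section
/- Let V be a finite dimensional graded vector space with degree -2 nilpotent operator N, V' an N-stable graded subspace with N^k : V'_{m+k} ≅ V'_{m-k} for all k ≥ 1, and V'' = V/V' with trivial induced N-action, concentrated in degrees ≥ m+1. Let δ_k : V''_{m+k+2} → coker(N : V'_{m+k+2} → V'_{m+k}) be the induced maps. If δ_k is bijective for all k ≥ 0, then N^k : V_{m+1+k} → V_{m+1-k} is an isomorphism for all k ≥ 1; that is, the grading on V satisfies the hard Lefschetz property with center m+1. -/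
open Module LinearMap Function

/-- **Remark 1.4 of Dimca–Saito.** In the setting of Lemma 1.3 (`V` finite dimensional
graded `ℚ`-vector space with degree `-2` operator `N`, `V'` a graded `N`-stable subspace
satisfying hard Lefschetz with center `m`, `V'' = V/V'` with zero induced `N`-action
and concentrated in degrees `> m`), if all the induced maps
`δ_k : V''_{m+k+2} → coker (N : V'_{m+k+2} → V'_{m+k})` are bijective, then the grading
on `V` satisfies hard Lefschetz with center `m+1`:
`N^k : V_{m+1+k} ≃ V_{m+1-k}` for all `k ≥ 1`. -/
theorem stmt2
    {V : Type} [AddCommGroup V] [Module ℚ V] [FiniteDimensional ℚ V]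
    (Vk V'k : ℤ → Submodule ℚ V)
    (hInt : DirectSum.IsInternal Vk)
    (N : V →ₗ[ℚ] V)
    (hdeg : ∀ k : ℤ, ∀ x ∈ Vk k, N x ∈ Vk (k - 2))
    (hsub : ∀ k : ℤ, V'k k ≤ Vk k)
    (hstab : ∀ k : ℤ, ∀ x ∈ V'k k, N x ∈ V'k (k - 2))
    (V' : Submodule ℚ V) (hV' : V' = ⨆ k, V'k k)
    (hcomp : ∀ (k : ℤ) (x : V), x ∈ V' → x ∈ Vk k → x ∈ V'k k)
    (m : ℤ)
    -- the induced action of `N` on `V'' = V/V'` vanishes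
    (hzero : ∀ x : V, N x ∈ V')
    -- `V''_k = 0` unless `k > m`
    (hconc : ∀ k : ℤ, k ≤ m → Vk k ≤ V')
    (hm' : ∀ k : ℕ, ∀ x ∈ V'k (m + k), (N ^ k) x ∈ V'k (m - k))
    -- hard Lefschetz for `V'` with center `m`
    (hLef : ∀ k : ℕ, 1 ≤ k → Function.Bijective ((N ^ k).restrict (hm' k)))
    (hm1 : ∀ k : ℤ, ∀ x ∈ V'k (k + 2), N x ∈ V'k k)
    -- the maps `δ_k : V''_{m+k+2} → C'_{m+k}` induced by `N`
    (δ : ∀ k : ℕ, ((Vk (m + k + 2)).map V'.mkQ) →ₗ[ℚ]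
        (V'k (m + k) ⧸ LinearMap.range (N.restrict (hm1 (m + k)))))
    (hδ : ∀ (k : ℕ) (x : V) (hx : x ∈ Vk (m + k + 2)) (h1 : N x ∈ V'k (m + k)),
        δ k ⟨V'.mkQ x, Submodule.mem_map_of_mem hx⟩ = Submodule.Quotient.mk ⟨N x, h1⟩)
    -- all `δ_k` are bijective
    (hδbij : ∀ k : ℕ, Function.Bijective (δ k))
    (hmapV : ∀ k : ℕ, ∀ x ∈ Vk (m + 1 + k), (N ^ k) x ∈ Vk (m + 1 - k)) :
    ∀ k : ℕ, 1 ≤ k → Function.Bijective ((N ^ k).restrict (hmapV k)) := by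

  have hbij : ∀ jj : ℕ, Function.Bijective ((N ^ jj).restrict (hm' jj)) := by
    intro jj
    rcases Nat.eq_zero_or_pos jj with h | h
    · subst h
      constructor
      · intro a b hab
        have h2 := congrArg Subtype.val hab
        simp [LinearMap.restrict_apply] at h2
        exact h2
      · rintro ⟨y, hy⟩
        have e : (m - ((0:ℕ):ℤ)) = m + ((0:ℕ):ℤ) := by push_cast; ring
        exact ⟨⟨y, e ▸ hy⟩, Subtype.ext (by simp [LinearMap.restrict_apply])⟩
    · exact hLef jj h
  intro k hk
  obtain ⟨j, rfl⟩ : ∃ j, k = j + 1 := ⟨k - 1, by omega⟩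
  have e1 : m + 1 + ((j + 1 : ℕ) : ℤ) = m + (j : ℤ) + 2 := by push_cast; ring
  have e2 : m + (j : ℤ) + 2 - 2 = m + (j : ℤ) := by ring
  have key : ∀ x, x ∈ Vk (m + (j:ℤ) + 2) → (N ^ (j+1)) x = 0 → x = 0 := by
    intro x hx hNx
    have hNxV : N x ∈ Vk (m + (j:ℤ)) := e2 ▸ hdeg _ x hx
    have h1 : N x ∈ V'k (m + (j:ℤ)) := hcomp _ _ (hzero x) hNxV
    have hNj : (N ^ j) (N x) = 0 := by
      have hps : (N ^ (j+1)) x = (N ^ j) (N x) := by rw [pow_succ]; rfl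
      rw [← hps, hNx]
    have hNx0 : N x = 0 := by
      have h0 : (N ^ j).restrict (hm' j) ⟨N x, h1⟩ = 0 := by
        apply Subtype.ext
        simpa [LinearMap.restrict_apply] using hNj
      have h3 := (hbij j).injective (h0.trans (map_zero _).symm)
      exact congrArg Subtype.val h3
    have hδ0 : δ j ⟨V'.mkQ x, Submodule.mem_map_of_mem hx⟩ = 0 := by
      rw [hδ j x hx h1]
      have h4 : (⟨N x, h1⟩ : V'k (m + (j:ℤ))) = 0 := Subtype.ext hNx0
      rw [h4]
      exact Submodule.Quotient.mk_eq_zero _ |>.mpr (Submodule.zero_mem _)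
    have hmk : V'.mkQ x = 0 := by
      have h5 := (hδbij j).injective (hδ0.trans (map_zero _).symm)
      exact congrArg Subtype.val h5
    have hxV' : x ∈ V' := by
      rwa [Submodule.mkQ_apply, Submodule.Quotient.mk_eq_zero] at hmk
    have e3 : m + (j:ℤ) + 2 = m + ((j+2:ℕ):ℤ) := by push_cast; ring
    have hxV'k : x ∈ V'k (m + ((j+2:ℕ):ℤ)) := hcomp _ _ hxV' (e3 ▸ hx)
    have hNj2 : (N ^ (j+2)) x = 0 := by
      have hps : (N ^ (j+2)) x = N ((N ^ (j+1)) x) := by rw [pow_succ']; rfl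
      rw [hps, hNx, map_zero]
    have h0 : (N ^ (j+2)).restrict (hm' (j+2)) ⟨x, hxV'k⟩ = 0 := by
      apply Subtype.ext
      simpa [LinearMap.restrict_apply] using hNj2
    have h6 := (hLef (j+2) (by omega)).injective (h0.trans (map_zero _).symm)
    exact congrArg Subtype.val h6
  constructor
  · intro a b hab
    have hval : (N ^ (j+1)) (a.1 : V) = (N ^ (j+1)) (b.1 : V) := by
      have := congrArg Subtype.val hab
      simpa [LinearMap.restrict_apply] using this
    have hdiff : (N ^ (j+1)) ((a.1 : V) - b.1) = 0 := by
      rw [map_sub, hval, sub_self]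
    have hmem : (a.1 : V) - b.1 ∈ Vk (m + (j:ℤ) + 2) :=
      e1 ▸ Submodule.sub_mem _ a.2 b.2
    exact Subtype.ext (sub_eq_zero.mp (key _ hmem hdiff))
  · rintro ⟨y, hy⟩
    have e4 : m + 1 - ((j+1:ℕ):ℤ) = m - (j:ℤ) := by push_cast; ring
    have hy1 : y ∈ Vk (m - (j:ℤ)) := e4 ▸ hy
    have hy' : y ∈ V'k (m - (j:ℤ)) := hcomp _ _ (hconc _ (by omega) hy1) hy1
    obtain ⟨z, hz⟩ := (hbij j).surjective ⟨y, hy'⟩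
    obtain ⟨u, hu⟩ := (hδbij j).surjective (Submodule.Quotient.mk z)
    obtain ⟨x, hx, hxu⟩ := Submodule.mem_map.mp u.2
    have hu' : u = ⟨V'.mkQ x, Submodule.mem_map_of_mem hx⟩ := Subtype.ext hxu.symm
    have h1 : N x ∈ V'k (m + (j:ℤ)) := hcomp _ _ (hzero x) (e2 ▸ hdeg _ x hx)
    have hδx : (Submodule.Quotient.mk ⟨N x, h1⟩ :
          V'k (m + (j:ℤ)) ⧸ LinearMap.range (N.restrict (hm1 (m + (j:ℤ))))) =
        Submodule.Quotient.mk z := by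
      rw [← hδ j x hx h1, ← hu', hu]
    have hrange : (⟨N x, h1⟩ : V'k (m + (j:ℤ))) - z ∈
        LinearMap.range (N.restrict (hm1 (m + (j:ℤ)))) :=
      (Submodule.Quotient.eq (LinearMap.range (N.restrict (hm1 (m + (j:ℤ)))))).mp hδx
    obtain ⟨w, hw⟩ := hrange
    have hwval : N (w.1 : V) = N x - z.1 := by
      have := congrArg Subtype.val hw
      simpa [LinearMap.restrict_apply] using this
    have hmem : x - (w.1 : V) ∈ Vk (m + 1 + ((j+1:ℕ):ℤ)) := by
      rw [e1]
      exact Submodule.sub_mem _ hx (hsub _ w.2)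
    refine ⟨⟨x - w.1, hmem⟩, ?_⟩
    apply Subtype.ext
    have hz' : (N ^ j) (z.1 : V) = y := by
      have := congrArg Subtype.val hz
      simpa [LinearMap.restrict_apply] using this
    show (N ^ (j+1)) (x - (w.1 : V)) = y
    have hps : (N ^ (j+1)) (x - (w.1 : V)) = (N ^ j) (N (x - w.1)) := by
      rw [pow_succ]; rfl
    rw [hps, map_sub, hwval]
    have : N x - (N x - z.1) = z.1 := by abel
    rw [this, hz']
end

section
/- Let H be a finite dimensional graded Q-vector space (grading W, pieces H_k) with a degree -2 operator N, and suppose there is a short exact sequence of graded spaces 0 → H_1 → H̃_1 → H^0 → 0 compatible with N, where N acts as zero on H^0 (placed in graded pieces) and one has the boundary map ∂'' : H^0 → coker(N : H_1 → H_1) from the snake lemma. Assume ∂'' is surjective with kernel equal to W_n H^0 (the part of H^0 of degree ≤ n). If on H̃_1 the operator N satisfies suitable Lefschetz conditions making the conclusion of the primitive decomposition available, then the grading on H_1 satisfies hard Lefschetz with center n: N^k : (H_1)_{n+k} ≅ (H_1)_{n-k} for all k ≥ 1. -/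
open Module LinearMap Function


/-- If `x ∈ Wk j` lies in the image of a degree `-2` operator `N` on an internally
graded module, then it is the image of an element of `Wk (j + 2)`. -/
lemma stmt5_aux {V : Type} [AddCommGroup V] [Module ℚ V]
    (Wk : ℤ → Submodule ℚ V) (hInt : DirectSum.IsInternal Wk)
    (N : V →ₗ[ℚ] V) (hdeg : ∀ k : ℤ, ∀ x ∈ Wk k, N x ∈ Wk (k - 2))
    (j : ℤ) (x : V) (hx : x ∈ Wk j) (z : V) (hz : N z = x) :
    ∃ y ∈ Wk (j + 2), N y = x := by
  classical
  have hz' : z ∈ iSup Wk := by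
    rw [hInt.submodule_iSup_eq_top]; trivial
  obtain ⟨f, hf⟩ := (Submodule.mem_iSup_iff_exists_dfinsupp' Wk z).mp hz'
  set y : V := (f (j + 2) : V) with hy
  have hymem : y ∈ Wk (j + 2) := (f (j + 2)).2
  -- `N z` is the sum of the images of the components of `z`
  have hsum : x = ∑ i ∈ f.support, N (f i : V) := by
    rw [← hz, ← hf, DFinsupp.sum, map_sum]
  -- split off the component at `j + 2`
  have hsplit : x - N y = ∑ i ∈ f.support.erase (j + 2), N (f i : V) := by
    by_cases hmem : (j + 2) ∈ f.support
    · rw [hsum, ← Finset.add_sum_erase _ _ hmem, hy]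
      abel
    · have : f (j + 2) = 0 := DFinsupp.notMem_support_iff.mp hmem
      rw [Finset.erase_eq_of_notMem hmem, hsum, hy, this]
      simp
  -- the remainder lies in the pieces of degree `≠ j`
  have hrem : x - N y ∈ ⨆ (i : ℤ) (_ : i ≠ j), Wk i := by
    rw [hsplit]
    refine Submodule.sum_mem _ fun i hi => ?_
    have hne : i - 2 ≠ j := by
      have := Finset.ne_of_mem_erase hi
      omega
    have h1 : N (f i : V) ∈ Wk (i - 2) := hdeg i _ (f i).2
    exact (le_iSup₂ (f := fun (i' : ℤ) (_ : i' ≠ j) => Wk i') (i - 2) hne) h1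
  -- but it also lies in `Wk j`, so it vanishes by independence
  have hNy : N y ∈ Wk j := by
    have := hdeg (j + 2) y hymem
    simpa using this
  have hzero : x - N y = 0 :=
    Submodule.disjoint_def.mp (hInt.submodule_iSupIndep j)
      _ (Submodule.sub_mem _ hx hNy) hrem
  exact ⟨y, hymem, (sub_eq_zero.mp hzero).symm⟩

/-- **Linear-algebra shadow of Lemma 3.2 of Dimca–Saito.**  Let `H̃₁` be a finite
dimensional graded `ℚ`-vector space (internal weight grading `Wk`) with a degree `-2`
operator `N`, `H₁ ⊆ H̃₁` a graded `N`-stable subspace with quotient `H⁰ = H̃₁/H₁` on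
which the induced `N`-action vanishes, and let `d : H⁰ → coker (N : H₁ → H₁)` be
the snake-lemma boundary map.  Assume condition (C): `d` is surjective and
`ker d = Wₙ H⁰` (the part of `H⁰` of degree `≤ n`), and assume the Lefschetz
condition on `H̃₁` making the primitive decomposition available (hard Lefschetz with
center `n+1`).  Then the grading of `H₁` satisfies hard Lefschetz with center `n`:
`N^k : (H₁)_{n+k} ≃ (H₁)_{n-k}` for all `k ≥ 1`. -/
theorem stmt5
    {V : Type} [AddCommGroup V] [Module ℚ V] [FiniteDimensional ℚ V]
    (Wk : ℤ → Submodule ℚ V) (hInt : DirectSum.IsInternal Wk)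
    (N : V →ₗ[ℚ] V)
    (hdeg : ∀ k : ℤ, ∀ x ∈ Wk k, N x ∈ Wk (k - 2))
    (H1 : Submodule ℚ V)
    (hgraded : H1 = ⨆ k, H1 ⊓ Wk k)
    (n : ℤ)
    -- the induced action of `N` on `H⁰ = H̃₁/H₁` vanishes
    (hzero : ∀ x : V, N x ∈ H1)
    (hstab : ∀ x ∈ H1, N x ∈ H1)
    -- the boundary map `d : H⁰ → coker (N | H₁)`
    (d : (V ⧸ H1) →ₗ[ℚ] (H1 ⧸ LinearMap.range (N.restrict hstab)))
    (hd : ∀ x : V, d (H1.mkQ x) = Submodule.Quotient.mk ⟨N x, hzero x⟩)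
    -- condition (C): `d` surjective with kernel `Wₙ H⁰`
    (hCsurj : Function.Surjective d)
    (hCker : LinearMap.ker d = ⨆ k : ℤ, ⨆ _ : k ≤ n, (Wk k).map H1.mkQ)
    -- the Lefschetz condition on `H̃₁`: hard Lefschetz with center `n+1`
    (hmapV : ∀ k : ℕ, ∀ x ∈ Wk (n + 1 + k), (N ^ k) x ∈ Wk (n + 1 - k))
    (hLefV : ∀ k : ℕ, 1 ≤ k → Function.Bijective ((N ^ k).restrict (hmapV k)))
    (hmap1 : ∀ k : ℕ, ∀ x ∈ H1 ⊓ Wk (n + k), (N ^ k) x ∈ H1 ⊓ Wk (n - k)) :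
    ∀ k : ℕ, 1 ≤ k → Function.Bijective ((N ^ k).restrict (hmap1 k)) := by
  -- Step 1: surjectivity of `d` forces `H1 ⊆ range N`.
  have hH1 : ∀ h ∈ H1, ∃ z : V, N z = h := by
    intro h hh
    obtain ⟨q, hq⟩ := hCsurj (Submodule.Quotient.mk ⟨h, hh⟩)
    obtain ⟨x, rfl⟩ := H1.mkQ_surjective q
    rw [hd] at hq
    obtain ⟨u, hu⟩ := (Submodule.Quotient.eq _).mp hq
    have hu' : N (u : V) = N x - h := by
      have := congrArg (Subtype.val) hu
      simpa [LinearMap.restrict_apply] using this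
    exact ⟨x - u, by rw [map_sub, hu']; abel⟩
  intro k hk
  have hk1 : 1 ≤ k + 1 := by omega
  -- index arithmetic
  have e1 : n + 1 + ((k + 1 : ℕ) : ℤ) = n + (k : ℤ) + 2 := by push_cast; ring
  have e2 : n + 1 - ((k + 1 : ℕ) : ℤ) = n - (k : ℤ) := by push_cast; ring
  constructor
  · -- injectivity
    rw [injective_iff_map_eq_zero]
    intro x hx0
    have hx0' : (N ^ k) (x : V) = 0 := by
      have := congrArg (Subtype.val) hx0
      simpa [LinearMap.restrict_apply] using this
    obtain ⟨z, hz⟩ := hH1 (x : V) x.2.1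
    obtain ⟨y, hy, hNy⟩ := stmt5_aux Wk hInt N hdeg (n + k) (x : V) x.2.2 z hz
    have hy' : y ∈ Wk (n + 1 + ((k + 1 : ℕ) : ℤ)) := by rwa [e1]
    have hNk1 : (N ^ (k + 1)) y = 0 := by
      rw [pow_succ, Module.End.mul_apply, hNy, hx0']
    have hinj := (hLefV (k + 1) hk1).1
    have h0 : ((N ^ (k + 1)).restrict (hmapV (k + 1))) ⟨y, hy'⟩ = 0 := by
      apply Subtype.ext
      simpa [LinearMap.restrict_apply] using hNk1
    have : (⟨y, hy'⟩ : Wk (n + 1 + ((k + 1 : ℕ) : ℤ))) = 0 := by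
      apply hinj
      rw [h0, map_zero]
    have hy0 : y = 0 := by simpa using congrArg Subtype.val this
    apply Subtype.ext
    rw [← hNy, hy0, map_zero]
    rfl
  · -- surjectivity
    intro z
    have hzmem : (z : V) ∈ Wk (n + 1 - ((k + 1 : ℕ) : ℤ)) := by rw [e2]; exact z.2.2
    obtain ⟨w, hw⟩ := (hLefV (k + 1) hk1).2 ⟨(z : V), hzmem⟩
    have hw' : (N ^ (k + 1)) (w : V) = (z : V) := by
      have := congrArg (Subtype.val) hw
      simpa [LinearMap.restrict_apply] using this
    have hwmem : (w : V) ∈ Wk (n + (k : ℤ) + 2) := by rw [← e1]; exact w.2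
    have hx1 : N (w : V) ∈ H1 := hzero _
    have hx2 : N (w : V) ∈ Wk (n + k) := by
      have := hdeg _ _ hwmem
      have e3 : n + (k : ℤ) + 2 - 2 = n + (k : ℤ) := by ring
      rwa [e3] at this
    refine ⟨⟨N (w : V), hx1, hx2⟩, ?_⟩
    apply Subtype.ext
    rw [LinearMap.restrict_apply]
    show (N ^ k) (N (w : V)) = (z : V)
    rw [← Module.End.mul_apply, ← pow_succ, hw']
end

section
/- Consider a commutative diagram of finite dimensional vector spaces with exact rows 0 → A → B → C → 0 and 0 → A → B' → C' → 0, where the second row is obtained from the first as a quotient by a subobject mapping isomorphically into both B and C (as in diagram (3.3.5)). Suppose a natural boundary map ∂ : C → coker(N : A → A) is defined for each such extension via a degree -2 operator N acting on the total space with N|_C inducing the map into A. If ∂ is bijective for the second extension (B', C') and the kernel of C → C' equals a specified subspace C_0 ⊆ C, then the boundary map ∂ for the first extension is surjective with kernel exactly C_0. -/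
open Module LinearMap Function

/-- **Comparison of boundary maps** (abstracted content of diagram (3.3.5) in the
proof of Theorem 3 of Dimca–Saito).  Let `A ⊆ B` with quotient `C = B/A`, and let
`N : B → B` satisfy `N(B) ⊆ A`, giving the snake-lemma boundary map
`∂ : C → coker (N : A → A)`, `∂ [x] = [N x]`.  Suppose `C` surjects onto `C'` with
kernel a specified subspace `C₀ ⊆ C`, and the boundary map factors through a map
`∂' : C' → coker (N|A)` (functoriality of the snake-lemma boundary) which is
bijective (the case of the local universal extension).  Then `∂` is surjective with
kernel exactly `C₀`. -/
theorem stmt15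
    {B : Type} [AddCommGroup B] [Module ℚ B] [FiniteDimensional ℚ B]
    (A : Submodule ℚ B)
    (N : B →ₗ[ℚ] B)
    (hN : ∀ x : B, N x ∈ A)
    (hNA : ∀ x ∈ A, N x ∈ A)
    -- the boundary map `∂ : C = B/A → coker (N : A → A)`
    (d : (B ⧸ A) →ₗ[ℚ] (A ⧸ LinearMap.range (N.restrict hNA)))
    (hd : ∀ x : B, d (A.mkQ x) = Submodule.Quotient.mk ⟨N x, hN x⟩)
    -- the quotient `C → C'` with kernel `C₀`
    {C' : Type} [AddCommGroup C'] [Module ℚ C']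
    (π : (B ⧸ A) →ₗ[ℚ] C')
    (hπ : Function.Surjective π)
    (C0 : Submodule ℚ (B ⧸ A))
    (hker : LinearMap.ker π = C0)
    -- the boundary map of the second extension, through which `∂` factors
    (d' : C' →ₗ[ℚ] (A ⧸ LinearMap.range (N.restrict hNA)))
    (hcomm : d = d' ∘ₗ π)
    (hbij : Function.Bijective d') :
    Function.Surjective d ∧ LinearMap.ker d = C0 := by
  constructor
  · rw [hcomm]
    exact hbij.surjective.comp hπ
  · rw [← hker]
    ext x
    simp [hcomm, hbij.injective.eq_iff' (map_zero d')]
end
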